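/- Let Φ be an n×d real matrix and let q, s, l be index sets with l disjoint from both q and s, and with max{δ_{|s|+|l|}, δ_{|q|+|l|}} < 1. Let P{Φ_l} denote the orthogonal projection onto the column span of Φ_l. Then for any a ∈ R^{|s|}, ‖Φ_qᵀ P{Φ_l} Φ_s a‖₂ ≤ (δ_{|s|+|l|} · δ_{|q|+|l|} / (1 − δ_{|l|})) ‖a‖₂. -/

import Mathlib

open Matrix Finset

noncomputable section

/-- Number of nonzero entries of a vector. -/
def sparsity {d : ℕ} (x : Fin d → ℝ) : ℕ :=
  (Finset.univ.filter fun i => x i ≠ 0).card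

/-- Squared Euclidean norm. -/
def nsq {k : Type*} [Fintype k] (v : k → ℝ) : ℝ := ∑ i, v i ^ 2

/-- Euclidean (ℓ₂) norm. -/
def l2 {k : Type*} [Fintype k] (v : k → ℝ) : ℝ := Real.sqrt (nsq v)

/-- `Φ` satisfies the order-`t` restricted isometry property with constant `δ`. -/
def satRIP {n d : ℕ} (Φ : Matrix (Fin n) (Fin d) ℝ) (t : ℕ) (δ : ℝ) : Prop :=
  ∀ x : Fin d → ℝ, sparsity x ≤ t →
    (1 - δ) * nsq x ≤ nsq (Φ.mulVec x) ∧ nsq (Φ.mulVec x) ≤ (1 + δ) * nsq x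

/-- The order-`t` RIP constant of `Φ` : the smallest `δ ≥ 0` satisfying the RIP bounds. -/
def ripConst {n d : ℕ} (Φ : Matrix (Fin n) (Fin d) ℝ) (t : ℕ) : ℝ :=
  sInf {δ : ℝ | 0 ≤ δ ∧ satRIP Φ t δ}

/-- The submatrix of `Φ` consisting of the columns indexed by `s`. -/
def cols {n d : ℕ} (Φ : Matrix (Fin n) (Fin d) ℝ) (s : Finset (Fin d)) :
    Matrix (Fin n) {i // i ∈ s} ℝ := Φ.submatrix id (fun i => (i : Fin d))

/-- Orthogonal projection `P{Φ_s} = Φ_s (Φ_sᵀ Φ_s)⁻¹ Φ_sᵀ` onto the column span of `Φ_s`. -/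
def proj {n d : ℕ} (Φ : Matrix (Fin n) (Fin d) ℝ) (s : Finset (Fin d)) :
    Matrix (Fin n) (Fin n) ℝ :=
  cols Φ s * ((cols Φ s)ᵀ * cols Φ s)⁻¹ * (cols Φ s)ᵀ

/-- Least-squares residual `v^{⊥s} = (I - P{Φ_s}) v`. -/
def residVec {n d : ℕ} (Φ : Matrix (Fin n) (Fin d) ℝ) (s : Finset (Fin d)) (y : Fin n → ℝ) :
    Fin n → ℝ := y - (proj Φ s).mulVec y

/-- The `i`-th column of `Φ`. -/
def col {n d : ℕ} (Φ : Matrix (Fin n) (Fin d) ℝ) (i : Fin d) : Fin n → ℝ := fun k => Φ k i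

/-- `x` is a least-squares estimate of `y` supported on `s`:
it is supported on `s` and minimizes `‖y - Φ z‖₂` over all `z` supported on `s`. -/
def leastSq {n d : ℕ} (Φ : Matrix (Fin n) (Fin d) ℝ) (y : Fin n → ℝ) (s : Finset (Fin d))
    (x : Fin d → ℝ) : Prop :=
  (∀ i, i ∉ s → x i = 0) ∧
  ∀ z : Fin d → ℝ, (∀ i, i ∉ s → z i = 0) → nsq (y - Φ.mulVec x) ≤ nsq (y - Φ.mulVec z)

/-- The support of a vector, as a `Finset`. -/
def spt {d : ℕ} (x : Fin d → ℝ) : Finset (Fin d) :=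
  Finset.univ.filter fun i => x i ≠ 0

/-!
Write `G = Φ_lᵀ Φ_l`, so that `P{Φ_l} Φ_s a = Φ_l G⁻¹ (Φ_lᵀ Φ_s a)`. Polarizing the RIP of order
`|l| + |s|` shows that blocks of columns with disjoint index sets are nearly orthogonal:
`‖Φ_lᵀ Φ_s a‖₂ ≤ δ_{|s|+|l|} ‖a‖₂`, and likewise `‖Φ_qᵀ Φ_l w‖₂ ≤ δ_{|q|+|l|} ‖w‖₂`.
The lower RIP bound of order `|l|` gives `y ⬝ G y = ‖Φ_l y‖₂² ≥ (1 - δ_{|l|}) ‖y‖₂²`, hence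
`‖G⁻¹ z‖₂ ≤ ‖z‖₂ / (1 - δ_{|l|})`. Chaining the three estimates gives the bound.
-/

section Norms

variable {k : Type*} [Fintype k]

lemma nsq_eq_dotProduct (v : k → ℝ) : nsq v = v ⬝ᵥ v := by
  simp only [nsq, dotProduct, sq]

lemma nsq_nonneg (v : k → ℝ) : 0 ≤ nsq v :=
  Finset.sum_nonneg fun _ _ => sq_nonneg _

lemma nsq_eq_zero_iff {v : k → ℝ} : nsq v = 0 ↔ v = 0 := by
  rw [nsq_eq_dotProduct, dotProduct_self_eq_zero]

lemma nsq_smul (c : ℝ) (v : k → ℝ) : nsq (c • v) = c ^ 2 * nsq v := by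
  simp only [nsq, Pi.smul_apply, smul_eq_mul, mul_pow, Finset.mul_sum]

lemma l2_nonneg (v : k → ℝ) : 0 ≤ l2 v := Real.sqrt_nonneg _

lemma l2_sq (v : k → ℝ) : l2 v ^ 2 = nsq v := Real.sq_sqrt (nsq_nonneg v)

lemma l2_eq_zero_iff {v : k → ℝ} : l2 v = 0 ↔ v = 0 := by
  rw [l2, Real.sqrt_eq_zero (nsq_nonneg v), nsq_eq_zero_iff]

lemma dotProduct_le_l2_mul_l2 (v w : k → ℝ) : v ⬝ᵥ w ≤ l2 v * l2 w := by
  rw [l2, l2, ← Real.sqrt_mul (nsq_nonneg v)]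
  refine Real.le_sqrt_of_sq_le ?_
  simpa only [dotProduct, nsq] using Finset.sum_mul_sq_le_sq_mul_sq Finset.univ v w

end Norms

section ExtendByZero

variable {d : ℕ} {s : Finset (Fin d)}

def extendByZero (s : Finset (Fin d)) (a : {i // i ∈ s} → ℝ) : Fin d → ℝ :=
  fun i => if h : i ∈ s then a ⟨i, h⟩ else 0

lemma extendByZero_coe (a : {i // i ∈ s} → ℝ) (i : {i // i ∈ s}) : extendByZero s a i = a i :=
  dif_pos i.2

lemma extendByZero_of_notMem (a : {i // i ∈ s} → ℝ) {i : Fin d} (h : i ∉ s) :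
    extendByZero s a i = 0 := dif_neg h

lemma sum_mul_extendByZero (f : Fin d → ℝ) (a : {i // i ∈ s} → ℝ) :
    ∑ i, f i * extendByZero s a i = ∑ i : {i // i ∈ s}, f i * a i := by
  rw [← Finset.sum_subset s.subset_univ fun i _ hi => by rw [extendByZero_of_notMem a hi,
    mul_zero], ← Finset.sum_coe_sort s]
  exact Finset.sum_congr rfl fun i _ => by rw [extendByZero_coe]

lemma mulVec_extendByZero {n : ℕ} (Φ : Matrix (Fin n) (Fin d) ℝ) (a : {i // i ∈ s} → ℝ) :
    Φ *ᵥ extendByZero s a = cols Φ s *ᵥ a :=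
  funext fun i => sum_mul_extendByZero (Φ i) a

lemma nsq_extendByZero (a : {i // i ∈ s} → ℝ) : nsq (extendByZero s a) = nsq a := by
  simp only [nsq, sq, sum_mul_extendByZero, extendByZero_coe]

lemma l2_extendByZero (a : {i // i ∈ s} → ℝ) : l2 (extendByZero s a) = l2 a := by
  rw [l2, l2, nsq_extendByZero]

end ExtendByZero

lemma sparsity_le_card {d : ℕ} {x : Fin d → ℝ} {s : Finset (Fin d)}
    (h : ∀ i ∉ s, x i = 0) : sparsity x ≤ s.card :=
  Finset.card_le_card fun i hi => by
    by_contra hs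
    exact (Finset.mem_filter.mp hi).2 (h i hs)

section RIPConstant

variable {n d : ℕ} (Φ : Matrix (Fin n) (Fin d) ℝ)

lemma nsq_mulVec_le (x : Fin d → ℝ) : nsq (Φ *ᵥ x) ≤ (∑ i, ∑ j, Φ i j ^ 2) * nsq x := by
  rw [Finset.sum_mul]
  exact Finset.sum_le_sum fun i _ => Finset.sum_mul_sq_le_sq_mul_sq Finset.univ (Φ i) x

lemma exists_satRIP (t : ℕ) : ∃ δ, 0 ≤ δ ∧ satRIP Φ t δ := by
  set M := ∑ i, ∑ j, Φ i j ^ 2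
  have hM : 0 ≤ M := Finset.sum_nonneg fun _ _ => Finset.sum_nonneg fun _ _ => sq_nonneg _
  refine ⟨M + 1, by linarith, fun x _ => ⟨?_, ?_⟩⟩
  · nlinarith [nsq_nonneg x, nsq_nonneg (Φ *ᵥ x)]
  · nlinarith [nsq_nonneg x, nsq_mulVec_le Φ x]

lemma isClosed_setOf_satRIP (t : ℕ) : IsClosed {δ : ℝ | 0 ≤ δ ∧ satRIP Φ t δ} := by
  simp only [satRIP, Set.ofPred_and, Set.ofPred_forall]
  refine isClosed_Ici.inter (isClosed_iInter fun x => isClosed_iInter fun _ =>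
    (isClosed_le ?_ ?_).inter (isClosed_le ?_ ?_)) <;> fun_prop

lemma satRIP_ripConst (t : ℕ) : satRIP Φ t (ripConst Φ t) :=
  ((isClosed_setOf_satRIP Φ t).csInf_mem (exists_satRIP Φ t) ⟨0, fun _ h => h.1⟩).2

lemma ripConst_nonneg (t : ℕ) : 0 ≤ ripConst Φ t :=
  le_csInf (exists_satRIP Φ t) fun _ h => h.1

lemma ripConst_mono {t t' : ℕ} (h : t' ≤ t) : ripConst Φ t' ≤ ripConst Φ t :=
  csInf_le_csInf ⟨0, fun _ h => h.1⟩ (exists_satRIP Φ t)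
    fun _ hδ => ⟨hδ.1, fun x hx => hδ.2 x (hx.trans h)⟩

end RIPConstant

lemma proj_mulVec {n d : ℕ} (Φ : Matrix (Fin n) (Fin d) ℝ) (l : Finset (Fin d))
    (v : Fin n → ℝ) :
    proj Φ l *ᵥ v = cols Φ l *ᵥ (((cols Φ l)ᵀ * cols Φ l)⁻¹ *ᵥ ((cols Φ l)ᵀ *ᵥ v)) := by
  simp only [proj, mulVec_mulVec, Matrix.mul_assoc]

namespace satRIP

variable {n d t : ℕ} {Φ : Matrix (Fin n) (Fin d) ℝ} {δ : ℝ}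

lemma mulVec_dotProduct_le_half (hR : satRIP Φ t δ) {u v : Fin d → ℝ}
    (hadd : sparsity (u + v) ≤ t) (hsub : sparsity (u - v) ≤ t) (huv : u ⬝ᵥ v = 0) :
    Φ *ᵥ u ⬝ᵥ Φ *ᵥ v ≤ δ / 2 * (nsq u + nsq v) := by
  have hvu : v ⬝ᵥ u = 0 := by rwa [dotProduct_comm]
  have hnorm_add : nsq (u + v) = nsq u + nsq v := by
    simp only [nsq_eq_dotProduct, dotProduct_add, add_dotProduct, huv, hvu]; ring
  have hnorm_sub : nsq (u - v) = nsq u + nsq v := by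
    simp only [nsq_eq_dotProduct, dotProduct_sub, sub_dotProduct, huv, hvu]; ring
  have polarization : nsq (Φ *ᵥ (u + v)) - nsq (Φ *ᵥ (u - v)) = 4 * (Φ *ᵥ u ⬝ᵥ Φ *ᵥ v) := by
    simp only [nsq_eq_dotProduct, mulVec_add, mulVec_sub, dotProduct_add, add_dotProduct,
      dotProduct_sub, sub_dotProduct, dotProduct_comm (Φ *ᵥ v) (Φ *ᵥ u)]
    ring
  have hupper := (hR _ hadd).2
  have hlower := (hR _ hsub).1
  rw [hnorm_add] at hupper
  rw [hnorm_sub] at hlower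
  linarith

lemma mulVec_dotProduct_le (hR : satRIP Φ t δ) {l s : Finset (Fin d)}
    (hdisj : Disjoint l s) (ht : l.card + s.card ≤ t) {u v : Fin d → ℝ}
    (hu : ∀ i ∉ l, u i = 0) (hv : ∀ i ∉ s, v i = 0) :
    Φ *ᵥ u ⬝ᵥ Φ *ᵥ v ≤ δ * l2 u * l2 v := by
  rcases (l2_nonneg u).eq_or_lt with hu0 | hu0
  · obtain rfl := l2_eq_zero_iff.mp hu0.symm
    simp [← hu0]
  rcases (l2_nonneg v).eq_or_lt with hv0 | hv0
  · obtain rfl := l2_eq_zero_iff.mp hv0.symm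
    simp [← hv0]
  -- rescale both vectors to norm `‖u‖₂ ‖v‖₂`, which makes the step `xy ≤ (x² + y²) / 2` exact
  set u' := l2 v • u
  set v' := l2 u • v
  have hout : ∀ i ∉ l ∪ s, u' i = 0 ∧ v' i = 0 := fun i hi => by
    rw [mem_union, not_or] at hi
    simp [u', v', hu i hi.1, hv i hi.2]
  have hcard : (l ∪ s).card ≤ t := (card_union_le l s).trans ht
  have hortho : u' ⬝ᵥ v' = 0 := by
    refine Finset.sum_eq_zero fun i _ => ?_
    by_cases hi : i ∈ l
    · simp [u', v', hv i (disjoint_left.mp hdisj hi)]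
    · simp [u', v', hu i hi]
  have key := mulVec_dotProduct_le_half hR
    ((sparsity_le_card fun i hi => by simp [hout i hi]).trans hcard)
    ((sparsity_le_card fun i hi => by simp [hout i hi]).trans hcard) hortho
  simp only [u', v', mulVec_smul, smul_dotProduct, dotProduct_smul, smul_eq_mul, nsq_smul] at key
  rw [← l2_sq u, ← l2_sq v] at key
  refine le_of_mul_le_mul_left ?_ (mul_pos hu0 hv0)
  linear_combination key

lemma l2_transpose_cols_mulVec_le (hR : satRIP Φ t δ) (hδ : 0 ≤ δ) {l s : Finset (Fin d)}
    (hdisj : Disjoint l s) (ht : l.card + s.card ≤ t) (a : {i // i ∈ s} → ℝ) :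
    l2 ((cols Φ l)ᵀ *ᵥ (cols Φ s *ᵥ a)) ≤ δ * l2 a := by
  set z := (cols Φ l)ᵀ *ᵥ (cols Φ s *ᵥ a)
  have hz : l2 z ^ 2 ≤ δ * l2 z * l2 a := by
    have h := hR.mulVec_dotProduct_le hdisj ht (u := extendByZero l z) (v := extendByZero s a)
      (fun _ => extendByZero_of_notMem z) (fun _ => extendByZero_of_notMem a)
    have hzz : nsq z = cols Φ l *ᵥ z ⬝ᵥ cols Φ s *ᵥ a := by
      rw [nsq_eq_dotProduct, dotProduct_comm (cols Φ l *ᵥ z)]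
      exact dotProduct_transpose_mulVec _ _ _
    rwa [mulVec_extendByZero, mulVec_extendByZero, l2_extendByZero, l2_extendByZero, ← hzz,
      ← l2_sq] at h
  nlinarith [l2_nonneg z, l2_nonneg a, mul_nonneg hδ (l2_nonneg a)]

lemma le_nsq_cols_mulVec (hR : satRIP Φ t δ) {l : Finset (Fin d)} (ht : l.card ≤ t)
    (c : {i // i ∈ l} → ℝ) : (1 - δ) * nsq c ≤ nsq (cols Φ l *ᵥ c) := by
  have h := hR (extendByZero l c) ((sparsity_le_card fun _ => extendByZero_of_notMem c).trans ht)
  rw [mulVec_extendByZero, nsq_extendByZero] at h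
  exact h.1

lemma isUnit_gram (hR : satRIP Φ t δ) (hδ : δ < 1) {l : Finset (Fin d)} (ht : l.card ≤ t) :
    IsUnit ((cols Φ l)ᵀ * cols Φ l) := by
  have hinj : Function.Injective (cols Φ l).mulVec := fun x y hxy => by
    have h := hR.le_nsq_cols_mulVec ht (x - y)
    rw [mulVec_sub, hxy, sub_self, nsq_eq_zero_iff.mpr rfl] at h
    have := nsq_nonneg (x - y)
    exact sub_eq_zero.mp (nsq_eq_zero_iff.mp (by nlinarith))
  simpa only [conjTranspose_eq_transpose_of_trivial] using
    (PosDef.conjTranspose_mul_self _ hinj).isUnit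

lemma l2_gram_inv_mulVec_le (hR : satRIP Φ t δ) (hδ : δ < 1) {l : Finset (Fin d)}
    (ht : l.card ≤ t) (z : {i // i ∈ l} → ℝ) :
    l2 (((cols Φ l)ᵀ * cols Φ l)⁻¹ *ᵥ z) ≤ l2 z / (1 - δ) := by
  set G := (cols Φ l)ᵀ * cols Φ l
  set y := G⁻¹ *ᵥ z
  have hGy : G *ᵥ y = z := by
    rw [mulVec_mulVec, mul_nonsing_inv _ ((isUnit_iff_isUnit_det G).mp (hR.isUnit_gram hδ ht)),
      one_mulVec]
  have hy : (1 - δ) * l2 y ^ 2 ≤ l2 y * l2 z :=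
    calc (1 - δ) * l2 y ^ 2 ≤ nsq (cols Φ l *ᵥ y) := by rw [l2_sq]; exact hR.le_nsq_cols_mulVec ht y
      _ = y ⬝ᵥ G *ᵥ y := by
        rw [← mulVec_mulVec, dotProduct_transpose_mulVec, nsq_eq_dotProduct]
      _ ≤ l2 y * l2 z := hGy ▸ dotProduct_le_l2_mul_l2 y z
  rw [le_div_iff₀ (by linarith)]
  nlinarith [l2_nonneg y, l2_nonneg z]

end satRIP

/-- for `l` disjoint from both `q` and `s`, with
`max{δ_{|s|+|l|}, δ_{|q|+|l|}} < 1`,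
`‖Φ_qᵀ P{Φ_l} Φ_s a‖₂ ≤ (δ_{|s|+|l|} δ_{|q|+|l|} / (1 − δ_{|l|})) ‖a‖₂`. -/
theorem stmt3 {n d : ℕ} (Φ : Matrix (Fin n) (Fin d) ℝ) (q s l : Finset (Fin d))
    (hdisj1 : Disjoint l q) (hdisj2 : Disjoint l s)
    (hδ : max (ripConst Φ (s.card + l.card)) (ripConst Φ (q.card + l.card)) < 1)
    (a : {i // i ∈ s} → ℝ) :
    l2 ((cols Φ q)ᵀ.mulVec ((proj Φ l).mulVec ((cols Φ s).mulVec a))) ≤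
      ripConst Φ (s.card + l.card) * ripConst Φ (q.card + l.card) /
        (1 - ripConst Φ l.card) * l2 a := by
  set δs := ripConst Φ (s.card + l.card)
  set δq := ripConst Φ (q.card + l.card)
  set δl := ripConst Φ l.card
  have hδl : δl < 1 :=
    (ripConst_mono Φ (Nat.le_add_left _ _)).trans_lt ((le_max_left _ _).trans_lt hδ)
  have hgap : 0 < 1 - δl := by linarith
  set z := (cols Φ l)ᵀ *ᵥ (cols Φ s *ᵥ a)
  set w := ((cols Φ l)ᵀ * cols Φ l)⁻¹ *ᵥ z
  have hz : l2 z ≤ δs * l2 a := (satRIP_ripConst Φ _).l2_transpose_cols_mulVec_le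
    (ripConst_nonneg Φ _) hdisj2 (add_comm _ _).le a
  have hw : l2 w ≤ l2 z / (1 - δl) := (satRIP_ripConst Φ _).l2_gram_inv_mulVec_le hδl le_rfl z
  rw [proj_mulVec]
  calc l2 ((cols Φ q)ᵀ *ᵥ (cols Φ l *ᵥ w)) ≤ δq * l2 w :=
        (satRIP_ripConst Φ _).l2_transpose_cols_mulVec_le (ripConst_nonneg Φ _)
          hdisj1.symm le_rfl w
    _ ≤ δq * (δs * l2 a / (1 - δl)) := mul_le_mul_of_nonneg_left
        (hw.trans (div_le_div_of_nonneg_right hz hgap.le)) (ripConst_nonneg Φ _)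
    _ = δs * δq / (1 - δl) * l2 a := by ring
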